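/- arXiv:1402.6471 — 5 statements merged into one kernel-verified Lean document; each statement's English description precedes it below -/
import Mathlib

section
/- Let X, B, Y be Banach spaces such that X embeds compactly into B and B embeds continuously into Y. Let T > 0, let 1 ≤ p < ∞ and r ≥ 1. Let F be a family of functions u : [0,T] → X that is bounded in L^p(0,T;X), and suppose that each u ∈ F admits a function g_u ∈ L^r(0,T;Y) with u(t) = u(0) + ∫_0^t g_u(s) ds in Y for all t ∈ [0,T], the family {g_u : u ∈ F} being bounded in L^r(0,T;Y). Then F is relatively compact in L^p(0,T;B). -/
/-!
Averaging over the cells of a uniform partition of `(0, T]` into `n` intervals of length `h`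
is a contraction `P` of `L^p`, and it sends a bounded family in `L^p(0,T;X)` to step functions
whose values stay in a bounded set of `X`; through the compact embedding these step functions
form a compact subset of `L^p(0,T;B)`. It therefore suffices to make `u - P u` uniformly small
in `L^p(0,T;B)`. Ehrling's inequality `‖x‖_B ≤ η ‖x‖_X + M_η ‖x‖_Y` bounds it by
`2 η C + M_η ‖u - P u‖_{L^p(Y)}`, and in `Y` the oscillation of `u` on a cell is at most the
integral of `‖g u‖` over that cell, whence `‖u - P u‖_{L^p(Y)} ≤ h^{1/p} ‖g u‖_{L^1}`.
Choosing first `η` and then `h` small shows that the family is totally bounded.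
-/

open MeasureTheory Filter
open scoped ENNReal NNReal
open Set
open scoped Function

theorem ENNReal.sum_rpow_le_rpow_sum {ι : Type*} (s : Finset ι) (f : ι → ℝ≥0∞) {q : ℝ}
    (hq : 1 ≤ q) : ∑ k ∈ s, f k ^ q ≤ (∑ k ∈ s, f k) ^ q := by
  classical
  induction s using Finset.induction with
  | empty => simp [ENNReal.zero_rpow_of_pos (zero_lt_one.trans_le hq)]
  | insert k s hk ih =>
    rw [Finset.sum_insert hk, Finset.sum_insert hk]
    exact (add_le_add_right ih _).trans (ENNReal.add_rpow_le_rpow_add _ _ hq)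

theorem exists_norm_le_mul_norm_add_mul_norm_comp {X B Y : Type*}
    [NormedAddCommGroup X] [NormedSpace ℝ X] [NormedAddCommGroup B] [NormedSpace ℝ B]
    [NormedAddCommGroup Y] [NormedSpace ℝ Y]
    (A : X →L[ℝ] B) (hA : IsCompact (closure (A '' Metric.closedBall 0 1)))
    (J : B →L[ℝ] Y) (hJ : Function.Injective J) {η : ℝ} (hη : 0 < η) :
    ∃ M, 0 ≤ M ∧ ∀ x, ‖A x‖ ≤ η * ‖x‖ + M * ‖J (A x)‖ := by
  set K := closure (A '' Metric.closedBall 0 1) ∩ {b | η ≤ ‖b‖}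
  have hK : IsCompact K := hA.inter_right (isClosed_le continuous_const continuous_norm)
  -- `K` avoids `0` and `J` is injective, so `‖J ·‖` has a positive minimum on `K`.
  obtain ⟨m, hm, hmK⟩ : ∃ m > 0, ∀ b ∈ K, m ≤ ‖J b‖ := by
    rcases K.eq_empty_or_nonempty with hKe | hKne
    · exact ⟨1, one_pos, by simp [hKe]⟩
    obtain ⟨b₀, hb₀, hmin⟩ := hK.exists_isMinOn hKne J.continuous.norm.continuousOn
    refine ⟨‖J b₀‖, norm_pos_iff.2 fun h => ?_, hmin⟩
    have : b₀ = 0 := hJ (by rw [h, map_zero])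
    exact hη.not_ge (by simpa [this] using hb₀.2)
  have hunit : ∀ x : X, ‖x‖ = 1 → ‖A x‖ ≤ η + ‖A‖ / m * ‖J (A x)‖ := by
    intro x hx
    by_cases hAx : ‖A x‖ < η
    · nlinarith [norm_nonneg (J (A x)), div_nonneg (norm_nonneg A) hm.le]
    have hmem : A x ∈ K := ⟨subset_closure ⟨x, by simp [hx], rfl⟩, not_lt.1 hAx⟩
    calc ‖A x‖ ≤ ‖A‖ := by simpa [hx] using A.le_opNorm x
      _ = ‖A‖ / m * m := by field_simp
      _ ≤ η + ‖A‖ / m * ‖J (A x)‖ := by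
        nlinarith [hmK _ hmem, div_nonneg (norm_nonneg A) hm.le]
  refine ⟨‖A‖ / m, by positivity, fun x => ?_⟩
  rcases eq_or_ne x 0 with rfl | hx
  · simp
  have hxpos : 0 < ‖x‖ := norm_pos_iff.2 hx
  have hx_unit := hunit (‖x‖⁻¹ • x) (by simp [norm_smul, hxpos.ne'])
  simp only [map_smul, norm_smul, norm_inv, norm_norm] at hx_unit
  calc ‖A x‖ = ‖x‖ * (‖x‖⁻¹ * ‖A x‖) := by field_simp
    _ ≤ ‖x‖ * (η + ‖A‖ / m * (‖x‖⁻¹ * ‖J (A x)‖)) := by gcongr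
    _ = η * ‖x‖ + ‖A‖ / m * ‖J (A x)‖ := by field_simp

theorem eLpNorm_comp_le_of_norm_le_mul_add {α X B Y : Type*} {m : MeasurableSpace α}
    {μ : Measure α} [NormedAddCommGroup X] [NormedAddCommGroup B] [NormedAddCommGroup Y]
    {A : X → B} {L : X → Y} (hL : Continuous L) {η M : ℝ} (hη : 0 ≤ η) (hM : 0 ≤ M)
    (hAL : ∀ x, ‖A x‖ ≤ η * ‖x‖ + M * ‖L x‖) {p : ℝ≥0∞} (hp : 1 ≤ p) {v : α → X}
    (hv : AEStronglyMeasurable v μ) :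
    eLpNorm (fun a => A (v a)) p μ ≤
      ENNReal.ofReal η * eLpNorm v p μ + ENNReal.ofReal M * eLpNorm (fun a => L (v a)) p μ := by
  calc eLpNorm (fun a => A (v a)) p μ
      ≤ eLpNorm (fun a => η * ‖v a‖ + M * ‖L (v a)‖) p μ :=
        eLpNorm_mono_real fun a => hAL (v a)
    _ ≤ eLpNorm (fun a => η * ‖v a‖) p μ + eLpNorm (fun a => M * ‖L (v a)‖) p μ :=
        eLpNorm_add_le (hv.norm.const_mul η)
          ((hL.comp_aestronglyMeasurable hv).norm.const_mul M) hp
    _ = _ := by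
      rw [show (fun a => η * ‖v a‖) = η • fun a => ‖v a‖ from rfl,
        show (fun a => M * ‖L (v a)‖) = M • fun a => ‖L (v a)‖ from rfl,
        eLpNorm_const_smul, eLpNorm_const_smul, eLpNorm_norm, eLpNorm_norm,
        Real.enorm_of_nonneg hη, Real.enorm_of_nonneg hM]

theorem enorm_sub_le_lintegral_uIoc_of_eq_add_integral {E : Type*} [NormedAddCommGroup E]
    [NormedSpace ℝ E] {w g : ℝ → E} {a b : ℝ} (hg : IntegrableOn g (Ioc a b))
    (hw : ∀ t ∈ Icc a b, w t = w a + ∫ x in Ioc a t, g x) {s t : ℝ}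
    (hs : s ∈ Icc a b) (ht : t ∈ Icc a b) :
    ‖w t - w s‖ₑ ≤ ∫⁻ x in uIoc s t, ‖g x‖ₑ := by
  have hint : ∀ c ∈ Icc a b, IntervalIntegrable g volume a c := fun c hc =>
    (intervalIntegrable_iff_integrableOn_Ioc_of_le hc.1).2
      (hg.mono_set (Ioc_subset_Ioc_right hc.2))
  have hdiff : w t - w s = ∫ x in s..t, g x := by
    rw [hw t ht, hw s hs, ← intervalIntegral.integral_of_le ht.1,
      ← intervalIntegral.integral_of_le hs.1,
      ← intervalIntegral.integral_interval_sub_left (hint t ht) (hint s hs)]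
    abel
  rw [hdiff, ← enorm_norm, intervalIntegral.norm_integral_eq_norm_integral_uIoc, enorm_norm]
  exact enorm_integral_le_lintegral_enorm _

section Averages

variable {α E : Type*} {m : MeasurableSpace α} {μ : Measure α}
  [NormedAddCommGroup E] [NormedSpace ℝ E]

theorem ContinuousLinearMap.setAverage_comp_comm [CompleteSpace E] {F : Type*}
    [NormedAddCommGroup F] [NormedSpace ℝ F] [CompleteSpace F] (L : E →L[ℝ] F) {f : α → E}
    {s : Set α} (hf : IntegrableOn f s μ) : ⨍ x in s, L (f x) ∂μ = L (⨍ x in s, f x ∂μ) := by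
  rw [setAverage_eq, setAverage_eq, L.integral_comp_comm hf, map_smul]

theorem enorm_setAverage_sub_le [CompleteSpace E] {f : α → E} {s : Set α}
    (hs : MeasurableSet s) (h0 : μ s ≠ 0) (hμs : μ s ≠ ∞) (hf : IntegrableOn f s μ) {c : E}
    {G : ℝ≥0∞} (hG : ∀ y ∈ s, ‖f y - c‖ₑ ≤ G) : ‖(⨍ y in s, f y ∂μ) - c‖ₑ ≤ G := by
  have hmem : ∀ᵐ y ∂μ.restrict s, f y ∈ Metric.closedEBall c G :=
    ae_restrict_of_forall_mem hs fun y hy => by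
      rw [Metric.mem_closedEBall, edist_eq_enorm_sub]
      exact hG y hy
  have := (convex_closedEBall c G).set_average_mem Metric.isClosed_closedEBall h0 hμs hmem hf
  rwa [Metric.mem_closedEBall, edist_eq_enorm_sub] at this

theorem enorm_setAverage_mul_rpow_le_eLpNorm {p : ℝ≥0∞} (hp : 1 ≤ p) (f : α → E) {s : Set α}
    (h0 : μ s ≠ 0) (hμs : μ s ≠ ∞) :
    ‖⨍ x in s, f x ∂μ‖ₑ * μ s ^ (1 / p.toReal) ≤ eLpNorm f p (μ.restrict s) := by
  by_cases hf : AEStronglyMeasurable f (μ.restrict s)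
  swap
  · rw [setAverage_eq, integral_undef fun h => hf h.aestronglyMeasurable]
    simp
  have hHolder := eLpNorm_le_eLpNorm_mul_rpow_measure_univ hp hf
  rw [eLpNorm_one_eq_lintegral_enorm, Measure.restrict_apply_univ, ENNReal.toReal_one]
    at hHolder
  have havg : ‖⨍ x in s, f x ∂μ‖ₑ ≤ (μ s)⁻¹ * ∫⁻ x in s, ‖f x‖ₑ ∂μ := by
    rw [setAverage_eq, enorm_smul, Real.enorm_of_nonneg (by positivity), measureReal_def,
      ENNReal.ofReal_inv_of_pos (ENNReal.toReal_pos h0 hμs), ENNReal.ofReal_toReal hμs]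
    gcongr
    exact enorm_integral_le_lintegral_enorm _
  calc ‖⨍ x in s, f x ∂μ‖ₑ * μ s ^ (1 / p.toReal)
      ≤ (μ s)⁻¹ * (eLpNorm f p (μ.restrict s) * μ s ^ (1 / 1 - 1 / p.toReal)) *
          μ s ^ (1 / p.toReal) := by
        gcongr
        exact havg.trans (by gcongr)
    _ = eLpNorm f p (μ.restrict s) := by
      rw [mul_comm (μ s)⁻¹, mul_assoc, mul_assoc, mul_left_comm (μ s ^ _),
        ← ENNReal.rpow_add _ _ h0 hμs]
      simp [ENNReal.inv_mul_cancel h0 hμs]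

theorem norm_setAverage_le_of_eLpNorm_le {p : ℝ≥0∞} (hp : 1 ≤ p) {f : α → E} {s : Set α} {h : ℝ} (hh : 0 < h) (hs : μ s = ENNReal.ofReal h) {C : ℝ≥0}
    (hC : eLpNorm f p (μ.restrict s) ≤ C) : ‖⨍ x in s, f x ∂μ‖ ≤ C / h ^ (1 / p.toReal) := by
  have key := (enorm_setAverage_mul_rpow_le_eLpNorm hp f (by simp [hs, hh])
    (by simp [hs])).trans hC
  rwa [hs, ENNReal.ofReal_rpow_of_pos hh, ← ofReal_norm, ← ENNReal.ofReal_mul (norm_nonneg _),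
    ← ENNReal.ofReal_coe_nnreal, ENNReal.ofReal_le_ofReal_iff C.coe_nonneg,
    ← le_div_iff₀ (by positivity)] at key

section StepAverage

variable {ι : Type*} [Fintype ι] {I : ι → Set α}

variable (μ I) in
noncomputable def stepAverage (f : α → E) (x : α) : E :=
  ∑ k, (I k).indicator (fun _ => ⨍ y in I k, f y ∂μ) x

theorem stepAverage_eq_setAverage (hI : Pairwise (Disjoint on I)) (f : α → E) {k : ι}
    {x : α} (hx : x ∈ I k) : stepAverage μ I f x = ⨍ y in I k, f y ∂μ := by
  rw [stepAverage, Finset.sum_eq_single k, indicator_of_mem hx]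
  · exact fun j _ hjk => indicator_of_notMem (fun hj => (hI hjk).le_bot ⟨hj, hx⟩) _
  · simp

theorem stronglyMeasurable_stepAverage (hI : ∀ k, MeasurableSet (I k)) (f : α → E) :
    StronglyMeasurable (stepAverage μ I f) :=
  Finset.stronglyMeasurable_fun_sum _ fun k _ => stronglyMeasurable_const.indicator (hI k)

theorem ContinuousLinearMap.stepAverage_comp_comm [CompleteSpace E] {F : Type*}
    [NormedAddCommGroup F] [NormedSpace ℝ F] [CompleteSpace F] (L : E →L[ℝ] F) {f : α → E}
    (hf : ∀ k, IntegrableOn f (I k) μ) (x : α) :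
    stepAverage μ I (fun y => L (f y)) x = L (stepAverage μ I f x) := by
  simp only [stepAverage, map_sum, L.setAverage_comp_comm (hf _)]
  congr! 1 with k
  by_cases hx : x ∈ I k <;> simp [hx]

theorem eLpNorm_restrict_iUnion_le {F : Type*} [NormedAddCommGroup F] {p : ℝ≥0∞}
    (hp0 : p ≠ 0) (hp_top : p ≠ ∞) (hI : Pairwise (Disjoint on I))
    (hImeas : ∀ k, MeasurableSet (I k)) {g : α → F} {c : ι → ℝ≥0∞}
    (hc : ∀ k, ∀ x ∈ I k, ‖g x‖ₑ ≤ c k) :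
    eLpNorm g p (μ.restrict (⋃ k, I k)) ≤
      (∑ k, c k ^ p.toReal * μ (I k)) ^ (1 / p.toReal) := by
  rw [eLpNorm_eq_lintegral_rpow_enorm_toReal hp0 hp_top, lintegral_iUnion hImeas hI,
    tsum_fintype]
  gcongr with k
  rw [← setLIntegral_const]
  exact setLIntegral_mono' (hImeas k) fun x hx => by gcongr; exact hc k x hx

theorem eLpNorm_stepAverage_le {p : ℝ≥0∞} (hp : 1 ≤ p) (hp_top : p ≠ ∞)
    (hI : Pairwise (Disjoint on I)) (hImeas : ∀ k, MeasurableSet (I k))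
    (h0 : ∀ k, μ (I k) ≠ 0) (hfin : ∀ k, μ (I k) ≠ ∞) (f : α → E) :
    eLpNorm (stepAverage μ I f) p (μ.restrict (⋃ k, I k)) ≤
      eLpNorm f p (μ.restrict (⋃ k, I k)) := by
  have hp0 : p ≠ 0 := (zero_lt_one.trans_le hp).ne'
  have hq : 0 < p.toReal := ENNReal.toReal_pos hp0 hp_top
  refine (eLpNorm_restrict_iUnion_le hp0 hp_top hI hImeas fun k x hx => by
    rw [stepAverage_eq_setAverage hI f hx]).trans ?_
  rw [eLpNorm_eq_lintegral_rpow_enorm_toReal hp0 hp_top, lintegral_iUnion hImeas hI,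
    tsum_fintype]
  gcongr with k
  have hcell := enorm_setAverage_mul_rpow_le_eLpNorm hp f (h0 k) (hfin k)
  rw [eLpNorm_eq_lintegral_rpow_enorm_toReal hp0 hp_top] at hcell
  calc ‖⨍ y in I k, f y ∂μ‖ₑ ^ p.toReal * μ (I k)
      = (‖⨍ y in I k, f y ∂μ‖ₑ * μ (I k) ^ (1 / p.toReal)) ^ p.toReal := by
        rw [ENNReal.mul_rpow_of_nonneg _ _ hq.le, ← ENNReal.rpow_mul,
          one_div_mul_cancel hq.ne', ENNReal.rpow_one]
    _ ≤ ((∫⁻ x in I k, ‖f x‖ₑ ^ p.toReal ∂μ) ^ (1 / p.toReal)) ^ p.toReal := by gcongr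
    _ = ∫⁻ x in I k, ‖f x‖ₑ ^ p.toReal ∂μ := by
        rw [← ENNReal.rpow_mul, one_div_mul_cancel hq.ne', ENNReal.rpow_one]

theorem eLpNorm_sub_stepAverage_le [CompleteSpace E] {p : ℝ≥0∞} (hp : 1 ≤ p)
    (hp_top : p ≠ ∞) (hI : Pairwise (Disjoint on I)) (hImeas : ∀ k, MeasurableSet (I k))
    (h0 : ∀ k, μ (I k) ≠ 0) {V : ℝ≥0∞} (hV : ∀ k, μ (I k) ≤ V) (hV_top : V ≠ ∞)
    {f : α → E} (hf : ∀ k, IntegrableOn f (I k) μ) {G : ι → ℝ≥0∞}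
    (hG : ∀ k, ∀ x ∈ I k, ∀ y ∈ I k, ‖f y - f x‖ₑ ≤ G k) :
    eLpNorm (fun x => f x - stepAverage μ I f x) p (μ.restrict (⋃ k, I k)) ≤
      V ^ (1 / p.toReal) * ∑ k, G k := by
  have hp0 : p ≠ 0 := (zero_lt_one.trans_le hp).ne'
  have hq : 0 < p.toReal := ENNReal.toReal_pos hp0 hp_top
  refine (eLpNorm_restrict_iUnion_le hp0 hp_top hI hImeas (c := G) fun k x hx => ?_).trans ?_
  · rw [stepAverage_eq_setAverage hI f hx, enorm_sub_rev]
    exact enorm_setAverage_sub_le (hImeas k) (h0 k) ((hV k).trans_lt hV_top.lt_top).ne (hf k)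
      fun y hy => hG k x hx y hy
  calc (∑ k, G k ^ p.toReal * μ (I k)) ^ (1 / p.toReal)
      ≤ ((∑ k, G k) ^ p.toReal * V) ^ (1 / p.toReal) := by
        gcongr
        calc ∑ k, G k ^ p.toReal * μ (I k) ≤ ∑ k, G k ^ p.toReal * V := by
              gcongr with k
              exact hV k
          _ = (∑ k, G k ^ p.toReal) * V := (Finset.sum_mul ..).symm
          _ ≤ (∑ k, G k) ^ p.toReal * V := by
              gcongr
              exact ENNReal.sum_rpow_le_rpow_sum _ _ (ENNReal.toReal_mono hp_top hp)
    _ = V ^ (1 / p.toReal) * ∑ k, G k := by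
        rw [ENNReal.mul_rpow_of_nonneg _ _ (by positivity), ← ENNReal.rpow_mul,
          mul_one_div_cancel hq.ne', ENNReal.rpow_one, mul_comm]

theorem eLpNorm_comp_sub_stepAverage_le {X B Y : Type*}
    [NormedAddCommGroup X] [NormedSpace ℝ X] [CompleteSpace X]
    [NormedAddCommGroup B] [NormedSpace ℝ B] [CompleteSpace B]
    [NormedAddCommGroup Y] [NormedSpace ℝ Y] [CompleteSpace Y]
    {A : X →L[ℝ] B} {L : X →L[ℝ] Y} {η M : ℝ} (hη : 0 ≤ η) (hM : 0 ≤ M)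
    (hAL : ∀ x, ‖A x‖ ≤ η * ‖x‖ + M * ‖L x‖) {p : ℝ≥0∞} (hp : 1 ≤ p) (hp_top : p ≠ ∞)
    (hI : Pairwise (Disjoint on I)) (hImeas : ∀ k, MeasurableSet (I k))
    (h0 : ∀ k, μ (I k) ≠ 0) {V : ℝ≥0∞} (hV : ∀ k, μ (I k) ≤ V) (hV_top : V ≠ ∞)
    {u : α → X} (hu : AEStronglyMeasurable u (μ.restrict (⋃ k, I k)))
    (hu_int : ∀ k, IntegrableOn u (I k) μ) {G : ι → ℝ≥0∞}
    (hG : ∀ k, ∀ x ∈ I k, ∀ y ∈ I k, ‖L (u y) - L (u x)‖ₑ ≤ G k) :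
    eLpNorm (fun x => A (u x) - stepAverage μ I (fun y => A (u y)) x) p
        (μ.restrict (⋃ k, I k)) ≤
      ENNReal.ofReal η * (2 * eLpNorm u p (μ.restrict (⋃ k, I k))) +
        ENNReal.ofReal M * (V ^ (1 / p.toReal) * ∑ k, G k) := by
  set ν := μ.restrict (⋃ k, I k)
  have hPu : AEStronglyMeasurable (stepAverage μ I u) ν :=
    (stronglyMeasurable_stepAverage hImeas u).aestronglyMeasurable
  have hEhrling := eLpNorm_comp_le_of_norm_le_mul_add L.continuous hη hM hAL hp (hu.sub hPu)
  simp only [Pi.sub_apply, map_sub, ← A.stepAverage_comp_comm hu_int,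
    ← L.stepAverage_comp_comm hu_int] at hEhrling
  refine hEhrling.trans (add_le_add ?_ ?_)
  · gcongr
    calc eLpNorm (u - stepAverage μ I u) p ν
        ≤ eLpNorm u p ν + eLpNorm (stepAverage μ I u) p ν := eLpNorm_sub_le hu hPu hp
      _ ≤ eLpNorm u p ν + eLpNorm u p ν := by
        gcongr
        exact eLpNorm_stepAverage_le hp hp_top hI hImeas h0
          (fun k => ((hV k).trans_lt hV_top.lt_top).ne) u
      _ = 2 * eLpNorm u p ν := (two_mul _).symm
  · gcongr
    exact eLpNorm_sub_stepAverage_le hp hp_top hI hImeas h0 hV hV_top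
      (fun k => L.integrable_comp (hu_int k)) hG

end StepAverage

end Averages

section StepLp

variable {α E ι : Type*} {m : MeasurableSpace α} {μ : Measure α} [NormedAddCommGroup E]

theorem continuous_indicatorConstLp (p : ℝ≥0∞) [Fact (1 ≤ p)] {s : Set α}
    (hs : MeasurableSet s) (hμs : μ s ≠ ∞) :
    Continuous fun c : E => indicatorConstLp p hs hμs c := by
  refine (LipschitzWith.of_dist_le_mul (K := (μ.real s ^ (1 / p.toReal)).toNNReal)
    fun c d => ?_).continuous
  rw [dist_eq_norm, indicatorConstLp_sub, dist_eq_norm, Real.coe_toNNReal _ (by positivity),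
    mul_comm]
  exact norm_indicatorConstLp_le

variable [Fintype ι] {I : ι → Set α} [IsFiniteMeasure μ] (p : ℝ≥0∞)

variable (μ) in
noncomputable def stepLp (hI : ∀ k, MeasurableSet (I k)) (b : ι → E) : Lp E p μ :=
  ∑ k, indicatorConstLp p (hI k) (measure_ne_top μ (I k)) (b k)

theorem stepLp_ae_eq (hI : ∀ k, MeasurableSet (I k)) (b : ι → E) :
    stepLp μ p hI b =ᵐ[μ] fun x => ∑ k, (I k).indicator (fun _ => b k) x := by
  classical
  suffices ∀ s : Finset ι,
      ⇑(∑ k ∈ s, indicatorConstLp p (hI k) (measure_ne_top μ (I k)) (b k)) =ᵐ[μ]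
        fun x => ∑ k ∈ s, (I k).indicator (fun _ => b k) x from this _
  intro s
  induction s using Finset.induction with
  | empty => simpa using! Lp.coeFn_zero E p μ
  | insert k s hk ih =>
    simp only [Finset.sum_insert hk]
    filter_upwards [Lp.coeFn_add (indicatorConstLp p (hI k) (measure_ne_top μ (I k)) (b k)) _,
      indicatorConstLp_coeFn (p := p) (hs := hI k) (hμs := measure_ne_top μ (I k)) (c := b k),
      ih] with x h₁ h₂ h₃
    rw [h₁, Pi.add_apply, h₂, h₃]

theorem continuous_stepLp [Fact (1 ≤ p)] (hI : ∀ k, MeasurableSet (I k)) :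
    Continuous (stepLp μ p hI : (ι → E) → Lp E p μ) :=
  continuous_finsetSum _ fun k _ =>
    (continuous_indicatorConstLp p (hI k) (measure_ne_top μ (I k))).comp (continuous_apply k)

end StepLp

section UniformCell

variable {T : ℝ} {n : ℕ}

variable (T n) in
def uniformCell (k : Fin n) : Set ℝ :=
  Ioc (k * (T / n)) ((k + 1) * (T / n))

theorem measurableSet_uniformCell (k : Fin n) : MeasurableSet (uniformCell T n k) :=
  measurableSet_Ioc

theorem volume_uniformCell (k : Fin n) :
    volume (uniformCell T n k) = ENNReal.ofReal (T / n) := by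
  rw [uniformCell, Real.volume_Ioc]
  ring_nf

theorem pairwise_disjoint_uniformCell (hT : 0 ≤ T) : Pairwise (Disjoint on uniformCell T n) := by
  have hmono : Monotone fun k : ℕ => (k : ℝ) * (T / n) := Nat.mono_cast.mul_const (by positivity)
  intro i j hij
  simpa [Function.onFun, uniformCell] using
    hmono.pairwise_disjoint_on_Ioc_succ (Fin.val_injective.ne hij)

theorem iUnion_uniformCell (hT : 0 ≤ T) (hn : 0 < n) : ⋃ k, uniformCell T n k = Ioc 0 T := by
  have hmono : Monotone fun k : ℕ => (k : ℝ) * (T / n) := Nat.mono_cast.mul_const (by positivity)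
  have hnT : (n : ℝ) * (T / n) = T := by field_simp
  ext t
  simpa [Fin.exists_iff, uniformCell, hnT] using
    congrArg (t ∈ ·) (hmono.biUnion_Ico_Ioc_map_succ 0 n)

theorem uniformCell_subset_Ioc (hT : 0 ≤ T) (k : Fin n) : uniformCell T n k ⊆ Ioc 0 T :=
  iUnion_uniformCell hT k.pos ▸ subset_iUnion _ k

end UniformCell

theorem exists_pos_nat_div_rpow_lt (T : ℝ) {a δ : ℝ} (ha : 0 < a) (hδ : 0 < δ) :
    ∃ n : ℕ, 0 < n ∧ (T / n) ^ a < δ := by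
  have hlim : Tendsto (fun n : ℕ => (T / n) ^ a) atTop (nhds 0) := by
    simpa [Real.zero_rpow ha.ne'] using
      (tendsto_const_div_atTop_nhds_zero_nat T).rpow_const (Or.inr ha.le)
  exact ((eventually_gt_atTop 0).and (hlim.eventually (gt_mem_nhds hδ))).exists

theorem ofReal_mul_add_ofReal_mul_le {ε M : ℝ} (hε : 0 < ε) (hM : 0 ≤ M) (C D : ℝ≥0) :
    ENNReal.ofReal (ε / (4 * (C + 1))) * (2 * C) +
      ENNReal.ofReal M * (ENNReal.ofReal (ε / (2 * (M * D + 1))) * D) ≤ ENNReal.ofReal ε := by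
  have hC : ε / (4 * (C + 1)) * (2 * C) ≤ ε / 2 := by
    rw [div_mul_eq_mul_div, div_le_div_iff₀ (by positivity) (by positivity)]
    nlinarith [C.2]
  have hD : M * (ε / (2 * (M * D + 1)) * D) ≤ ε / 2 := by
    rw [← mul_assoc, mul_div_assoc', div_mul_eq_mul_div,
      div_le_div_iff₀ (by positivity) (by positivity)]
    nlinarith [D.2, mul_nonneg hM D.2]
  calc _ = ENNReal.ofReal (ε / (4 * (C + 1)) * (2 * C) + M * (ε / (2 * (M * D + 1)) * D)) := by
        rw [ENNReal.ofReal_add (by positivity) (by positivity),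
          ENNReal.ofReal_mul (by positivity), ENNReal.ofReal_mul hM,
          ENNReal.ofReal_mul (by positivity), ENNReal.ofReal_mul (by positivity),
          ENNReal.ofReal_coe_nnreal, ENNReal.ofReal_coe_nnreal]
        simp
    _ ≤ ENNReal.ofReal ε := ENNReal.ofReal_le_ofReal (by linarith)

theorem totallyBounded_of_forall_exists_dist_le {X : Type*} [PseudoMetricSpace X] {S : Set X}
    (h : ∀ ε > 0, ∃ K, TotallyBounded K ∧ ∀ x ∈ S, ∃ y ∈ K, dist x y ≤ ε) :
    TotallyBounded S := by
  refine Metric.totallyBounded_iff.2 fun ε hε => ?_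
  obtain ⟨K, hK, hSK⟩ := h (ε / 2) (half_pos hε)
  obtain ⟨t, ht, hKt⟩ := Metric.totallyBounded_iff.1 hK (ε / 2) (half_pos hε)
  refine ⟨t, ht, fun x hx => ?_⟩
  obtain ⟨y, hy, hxy⟩ := hSK x hx
  obtain ⟨z, hz, hyz⟩ := mem_iUnion₂.1 (hKt hy)
  rw [Metric.mem_ball] at hyz
  exact mem_iUnion₂.2 ⟨z, hz, (dist_triangle x y z).trans_lt (by linarith)⟩

section AubinLions

variable {X B Y : Type*}
  [NormedAddCommGroup X] [NormedSpace ℝ X] [CompleteSpace X]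
  [NormedAddCommGroup B] [NormedSpace ℝ B] [CompleteSpace B]
  [NormedAddCommGroup Y] [NormedSpace ℝ Y] [CompleteSpace Y]
  {A : X →L[ℝ] B} {J : B →L[ℝ] Y} {T : ℝ} {p : ℝ≥0∞}

theorem eLpNorm_sub_stepAverage_uniformCell_le {η M : ℝ} (hη : 0 ≤ η) (hM : 0 ≤ M)
    (hAL : ∀ x, ‖A x‖ ≤ η * ‖x‖ + M * ‖J (A x)‖) (hT : 0 < T) {n : ℕ} (hn : 0 < n)
    (hp : 1 ≤ p) (hp_top : p ≠ ∞) {u : ℝ → X} {g : ℝ → Y}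
    (hu : MemLp u p (volume.restrict (Ioc 0 T))) (hg : IntegrableOn g (Ioc 0 T))
    (h_prim : ∀ t ∈ Icc 0 T, J (A (u t)) = J (A (u 0)) + ∫ s in Ioc 0 t, g s) :
    eLpNorm (fun t => A (u t) - stepAverage volume (uniformCell T n) (fun s => A (u s)) t) p
        (volume.restrict (Ioc 0 T)) ≤
      ENNReal.ofReal η * (2 * eLpNorm u p (volume.restrict (Ioc 0 T))) +
        ENNReal.ofReal M *
          (ENNReal.ofReal (T / n) ^ (1 / p.toReal) * ∫⁻ t in Ioc 0 T, ‖g t‖ₑ) := by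
  have hU := iUnion_uniformCell hT.le hn
  have hsub := uniformCell_subset_Ioc (n := n) hT.le
  have hI := pairwise_disjoint_uniformCell (n := n) hT.le
  have h0 : ∀ k, volume (uniformCell T n k) ≠ 0 := fun k => by
    simp [volume_uniformCell, hT, hn]
  have hsum : ∑ k, ∫⁻ t in uniformCell T n k, ‖g t‖ₑ = ∫⁻ t in Ioc 0 T, ‖g t‖ₑ := by
    rw [← hU, lintegral_iUnion measurableSet_uniformCell hI, tsum_fintype]
  have hest := eLpNorm_comp_sub_stepAverage_le (L := J.comp A) hη hM hAL hp hp_top hI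
    measurableSet_uniformCell h0 (fun k => (volume_uniformCell k).le) ENNReal.ofReal_ne_top
    (hU ▸ hu.1) (fun k => IntegrableOn.mono_set (hu.integrable hp) (hsub k))
    (G := fun k => ∫⁻ t in uniformCell T n k, ‖g t‖ₑ) fun k x hx y hy =>
      (enorm_sub_le_lintegral_uIoc_of_eq_add_integral hg h_prim
        (Ioc_subset_Icc_self (hsub k hx)) (Ioc_subset_Icc_self (hsub k hy))).trans
      (lintegral_mono_set (Ioc_subset_Ioc (le_min hx.1.le hy.1.le) (max_le hx.2 hy.2)))
  rwa [hU, hsum] at hest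

theorem exists_isCompact_forall_dist_le_of_eq_add_integral
    (hA : ∀ s : Set X, Bornology.IsBounded s → IsCompact (closure (A '' s)))
    (hJ : Function.Injective J) (hT : 0 < T) [Fact (1 ≤ p)] (hp_top : p ≠ ∞)
    {F : Set (ℝ → X)} {g : (ℝ → X) → ℝ → Y} {C D : ℝ≥0}
    (hF_mem : ∀ u ∈ F, MemLp u p (volume.restrict (Ioc 0 T)))
    (hF_bdd : ∀ u ∈ F, eLpNorm u p (volume.restrict (Ioc 0 T)) ≤ C)
    (hg_int : ∀ u ∈ F, IntegrableOn (g u) (Ioc 0 T))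
    (hg_bdd : ∀ u ∈ F, ∫⁻ t in Ioc 0 T, ‖g u t‖ₑ ≤ D)
    (h_prim : ∀ u ∈ F, ∀ t ∈ Icc 0 T, J (A (u t)) = J (A (u 0)) + ∫ s in Ioc 0 t, g u s)
    {ε : ℝ} (hε : 0 < ε) :
    ∃ K : Set (Lp B p (volume.restrict (Ioc 0 T))), IsCompact K ∧
      ∀ u ∈ F, ∀ f : Lp B p (volume.restrict (Ioc 0 T)),
        f =ᵐ[volume.restrict (Ioc 0 T)] (fun t => A (u t)) → ∃ y ∈ K, dist f y ≤ ε := by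
  have hp : 1 ≤ p := Fact.out
  have hp_inv : 0 < 1 / p.toReal := one_div_pos.2 (ENNReal.toReal_pos (by positivity) hp_top)
  obtain ⟨M, hM, hAL⟩ := exists_norm_le_mul_norm_add_mul_norm_comp A
    (hA _ Metric.isBounded_closedBall) J hJ (η := ε / (4 * (C + 1))) (by positivity)
  obtain ⟨n, hn, hmesh⟩ := exists_pos_nat_div_rpow_lt T hp_inv
    (show 0 < ε / (2 * (M * D + 1)) by positivity)
  have hI : ∀ k, MeasurableSet (uniformCell T n k) := measurableSet_uniformCell
  refine ⟨stepLp _ p hI ''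
      univ.pi fun _ => closure (A '' Metric.closedBall 0 (C / (T / n) ^ (1 / p.toReal))),
    (isCompact_univ_pi fun _ => hA _ Metric.isBounded_closedBall).image (continuous_stepLp p hI),
    ?_⟩
  rintro u hu f hf
  refine ⟨stepLp _ p hI fun k => ⨍ t in uniformCell T n k, A (u t), ⟨_, fun k _ => ?_, rfl⟩, ?_⟩
  · have hsub := uniformCell_subset_Ioc hT.le k
    rw [A.setAverage_comp_comm (IntegrableOn.mono_set ((hF_mem u hu).integrable hp) hsub)]
    refine subset_closure ⟨_, mem_closedBall_zero_iff.2 ?_, rfl⟩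
    exact norm_setAverage_le_of_eLpNorm_le hp (by positivity) (volume_uniformCell k)
      ((eLpNorm_mono_measure _ (Measure.restrict_mono hsub le_rfl)).trans (hF_bdd u hu))
  · rw [Lp.dist_def, eLpNorm_congr_ae (hf.sub (stepLp_ae_eq p hI _))]
    refine ENNReal.toReal_le_of_le_ofReal hε.le
      (le_trans ?_ (ofReal_mul_add_ofReal_mul_le hε hM C D))
    refine (eLpNorm_sub_stepAverage_uniformCell_le (by positivity) hM hAL hT hn hp hp_top
      (hF_mem u hu) (hg_int u hu) (h_prim u hu)).trans ?_
    rw [ENNReal.ofReal_rpow_of_pos (by positivity)]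
    gcongr
    · exact hF_bdd u hu
    · exact hg_bdd u hu

end AubinLions

theorem aubin_lions_lp_general
    {X B Y : Type*}
    [NormedAddCommGroup X] [NormedSpace ℝ X] [CompleteSpace X]
    [NormedAddCommGroup B] [NormedSpace ℝ B] [CompleteSpace B]
    [NormedAddCommGroup Y] [NormedSpace ℝ Y] [CompleteSpace Y]
    (jXB : X →L[ℝ] B)
    (hjXB_cpt : ∀ s : Set X, Bornology.IsBounded s → IsCompact (closure (jXB '' s)))
    (jBY : B →L[ℝ] Y) (hjBY_inj : Function.Injective jBY)
    (T : ℝ) (hT : 0 < T)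
    (p r : ℝ≥0∞) [Fact (1 ≤ p)] (hp_top : p ≠ ∞) (hr : 1 ≤ r)
    (F : Set (ℝ → X)) (g : (ℝ → X) → ℝ → Y) (C C' : ℝ)
    (hF_mem : ∀ u ∈ F, MemLp u p (volume.restrict (Set.Ioc (0:ℝ) T)))
    (hF_bdd : ∀ u ∈ F, eLpNorm u p (volume.restrict (Set.Ioc (0:ℝ) T)) ≤ ENNReal.ofReal C)
    (hg_mem : ∀ u ∈ F, MemLp (g u) r (volume.restrict (Set.Ioc (0:ℝ) T)))
    (hg_bdd : ∀ u ∈ F, eLpNorm (g u) r (volume.restrict (Set.Ioc (0:ℝ) T)) ≤ ENNReal.ofReal C')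
    (h_prim : ∀ u ∈ F, ∀ t ∈ Set.Icc (0:ℝ) T,
      jBY (jXB (u t)) = jBY (jXB (u 0)) + ∫ s in Set.Ioc (0:ℝ) t, g u s) :
    IsCompact (closure
      {f : Lp B p (volume.restrict (Set.Ioc (0:ℝ) T)) |
        ∃ u ∈ F, (f : ℝ → B) =ᵐ[volume.restrict (Set.Ioc (0:ℝ) T)] fun t => jXB (u t)}) := by
  set D := ENNReal.ofReal C' * ENNReal.ofReal T ^ (1 - 1 / r.toReal)
  have hD_top : D ≠ ∞ := ENNReal.mul_ne_top ENNReal.ofReal_ne_top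
    (ENNReal.rpow_ne_top_of_ne_zero (by simpa using hT) ENNReal.ofReal_ne_top)
  have hg_L1 : ∀ u ∈ F, ∫⁻ t in Ioc 0 T, ‖g u t‖ₑ ≤ D.toNNReal := fun u hu => by
    have hHolder := eLpNorm_le_eLpNorm_mul_rpow_measure_univ hr (hg_mem u hu).1
    rw [eLpNorm_one_eq_lintegral_enorm, Measure.restrict_apply_univ, Real.volume_Ioc,
      sub_zero] at hHolder
    rw [ENNReal.coe_toNNReal hD_top]
    simpa [D] using hHolder.trans (mul_le_mul_left (hg_bdd u hu) _)
  rw [isCompact_iff_totallyBounded_isComplete, totallyBounded_closure]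
  refine ⟨totallyBounded_of_forall_exists_dist_le fun ε hε => ?_, isClosed_closure.isComplete⟩
  obtain ⟨K, hK, hKF⟩ := exists_isCompact_forall_dist_le_of_eq_add_integral hjXB_cpt
    hjBY_inj hT hp_top hF_mem hF_bdd (fun u hu => (hg_mem u hu).integrable hr) hg_L1 h_prim hε
  exact ⟨K, hK.totallyBounded, fun f ⟨u, hu, hf⟩ => hKF u hu f hf⟩

/-- **Aubin--Lions lemma** (Simon, Corollary 4, case `p < ∞`).
Let `X ⊂⊂ B ⊂ Y` be Banach spaces (compact embedding `jXB`, continuous embedding `jBY`).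
If `F` is a family of functions `[0,T] → X` bounded in `L^p(0,T;X)` (`1 ≤ p < ∞`) whose
time-derivatives `g u` (in the sense of primitives, valued in `Y`) are bounded in
`L^r(0,T;Y)` with `r ≥ 1`, then `F` is relatively compact in `L^p(0,T;B)`. -/
theorem aubin_lions_lp
    {X B Y : Type*}
    [NormedAddCommGroup X] [NormedSpace ℝ X] [CompleteSpace X]
    [NormedAddCommGroup B] [NormedSpace ℝ B] [CompleteSpace B]
    [NormedAddCommGroup Y] [NormedSpace ℝ Y] [CompleteSpace Y]
    (jXB : X →L[ℝ] B) (hjXB_inj : Function.Injective jXB)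
    (hjXB_cpt : ∀ s : Set X, Bornology.IsBounded s → IsCompact (closure (jXB '' s)))
    (jBY : B →L[ℝ] Y) (hjBY_inj : Function.Injective jBY)
    (T : ℝ) (hT : 0 < T)
    (p r : ℝ≥0∞) [Fact (1 ≤ p)] (hp_top : p ≠ ∞) (hr : 1 ≤ r)
    (F : Set (ℝ → X)) (g : (ℝ → X) → ℝ → Y) (C C' : ℝ)
    (hF_mem : ∀ u ∈ F, MemLp u p (volume.restrict (Set.Ioc (0:ℝ) T)))
    (hF_bdd : ∀ u ∈ F, eLpNorm u p (volume.restrict (Set.Ioc (0:ℝ) T)) ≤ ENNReal.ofReal C)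
    (hg_mem : ∀ u ∈ F, MemLp (g u) r (volume.restrict (Set.Ioc (0:ℝ) T)))
    (hg_bdd : ∀ u ∈ F, eLpNorm (g u) r (volume.restrict (Set.Ioc (0:ℝ) T)) ≤ ENNReal.ofReal C')
    (h_prim : ∀ u ∈ F, ∀ t ∈ Set.Icc (0:ℝ) T,
      jBY (jXB (u t)) = jBY (jXB (u 0)) + ∫ s in Set.Ioc (0:ℝ) t, g u s) :
    IsCompact (closure
      {f : Lp B p (volume.restrict (Set.Ioc (0:ℝ) T)) |
        ∃ u ∈ F, (f : ℝ → B) =ᵐ[volume.restrict (Set.Ioc (0:ℝ) T)] fun t => jXB (u t)}) :=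
  aubin_lions_lp_general jXB hjXB_cpt jBY hjBY_inj T hT p r hp_top hr F g C C' hF_mem hF_bdd hg_mem
    hg_bdd h_prim
end

section
/- Let X, B, Y be Banach spaces such that X embeds compactly into B and B embeds continuously into Y. Let T > 0 and r > 1. Let F be a family of functions u : [0,T] → X that is bounded in L^∞(0,T;X), and suppose that each u ∈ F admits a function g_u ∈ L^r(0,T;Y) with u(t) = u(0) + ∫_0^t g_u(s) ds in Y for all t ∈ [0,T], the family {g_u : u ∈ F} being bounded in L^r(0,T;Y). Then F is relatively compact in C([0,T];B), the space of continuous B-valued functions with the supremum norm (after composing with the embedding of X into B). -/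
/-!
By the primitive identity and Hölder's inequality, every curve `t ↦ jBY (jXB (u t))` is Hölder
continuous on `[0, T]` with exponent `1 - 1/r` and a constant independent of `u`. As `‖u‖ ≤ C`
almost everywhere and these curves are continuous, all values `jXB (u t)` lie in the compact set
`K = closure (jXB '' closedBall 0 C)`. On `K` the continuous injection `jBY` is a uniform
embedding, so the equicontinuity of the family in `Y` transfers to `B`, and Arzelà–Ascoli
concludes.
-/

open MeasureTheory Filter Set Function
open scoped ENNReal NNReal

theorem ENNReal.toReal_inv_le_one {r : ℝ≥0∞} (hr : 1 ≤ r) : r.toReal⁻¹ ≤ 1 := by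
  rw [← ENNReal.toReal_inv]
  exact ENNReal.toReal_le_of_le_ofReal zero_le_one (by simpa using ENNReal.inv_le_one.2 hr)

theorem ENNReal.toReal_inv_lt_one {r : ℝ≥0∞} (hr : 1 < r) : r.toReal⁻¹ < 1 := by
  rw [← ENNReal.toReal_inv]
  exact ENNReal.toReal_lt_of_lt_ofReal (by simpa using ENNReal.inv_lt_one.2 hr)

theorem enorm_setIntegral_le_eLpNorm_mul_measure_rpow {α E : Type*} [MeasurableSpace α]
    {μ : Measure α} [NormedAddCommGroup E] [NormedSpace ℝ E] {f : α → E} {s : Set α}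
    {r : ℝ≥0∞} (hr : 1 ≤ r) (hf : AEStronglyMeasurable f (μ.restrict s)) :
    ‖∫ x in s, f x ∂μ‖ₑ ≤ eLpNorm f r (μ.restrict s) * μ s ^ (1 - r.toReal⁻¹) := by
  calc ‖∫ x in s, f x ∂μ‖ₑ ≤ eLpNorm f 1 (μ.restrict s) := by
        rw [eLpNorm_one_eq_lintegral_enorm]; exact enorm_integral_le_lintegral_enorm _
    _ ≤ _ := by
        simpa [Measure.restrict_apply_univ] using eLpNorm_le_eLpNorm_mul_rpow_measure_univ hr hf

theorem holderOnWith_of_eq_add_setIntegral {E : Type*} [NormedAddCommGroup E] [NormedSpace ℝ E]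
    {v g : ℝ → E} {a b : ℝ} {r : ℝ≥0∞} {M : ℝ≥0} (hr : 1 ≤ r)
    (hg : MemLp g r (volume.restrict (Ioc a b))) (hM : eLpNorm g r (volume.restrict (Ioc a b)) ≤ M)
    (hv : ∀ t ∈ Icc a b, v t = v a + ∫ s in Ioc a t, g s) :
    HolderOnWith M (1 - r.toReal⁻¹).toNNReal v (Icc a b) := by
  -- for `r = ∞` the exponent is `1`, since `(∞ : ℝ≥0∞).toReal = 0`
  have hint : IntegrableOn g (Ioc a b) := hg.integrable hr
  have hθ : ((1 - r.toReal⁻¹).toNNReal : ℝ) = 1 - r.toReal⁻¹ :=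
    Real.coe_toNNReal _ (sub_nonneg.2 (ENNReal.toReal_inv_le_one hr))
  have hholder : ∀ s ∈ Icc a b, ∀ t ∈ Icc a b, s ≤ t →
      edist (v t) (v s) ≤ M * edist t s ^ ((1 - r.toReal⁻¹).toNNReal : ℝ) := by
    intro s hs t ht hst
    have hsub : Ioc s t ⊆ Ioc a b := Ioc_subset_Ioc hs.1 ht.2
    have hdiff : v t - v s = ∫ x in Ioc s t, g x := by
      rw [hv t ht, hv s hs, ← Ioc_union_Ioc_eq_Ioc hs.1 hst,
        setIntegral_union (Ioc_disjoint_Ioc_of_le le_rfl) measurableSet_Ioc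
          (hint.mono_set (Ioc_subset_Ioc le_rfl hs.2)) (hint.mono_set hsub)]
      abel
    calc edist (v t) (v s) = ‖∫ x in Ioc s t, g x‖ₑ := by rw [edist_eq_enorm_sub, hdiff]
      _ ≤ eLpNorm g r (volume.restrict (Ioc s t)) * volume (Ioc s t) ^ (1 - r.toReal⁻¹) :=
        enorm_setIntegral_le_eLpNorm_mul_measure_rpow hr
          (hg.1.mono_measure (Measure.restrict_mono hsub le_rfl))
      _ ≤ M * edist t s ^ ((1 - r.toReal⁻¹).toNNReal : ℝ) := by
        rw [hθ, Real.volume_Ioc, edist_dist, Real.dist_eq, abs_of_nonneg (sub_nonneg.2 hst)]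
        gcongr
        exact (eLpNorm_mono_measure _ (Measure.restrict_mono hsub le_rfl)).trans hM
  intro x hx y hy
  rcases le_total x y with hxy | hyx
  · rw [edist_comm, edist_comm x]; exact hholder x hx y hy hxy
  · exact hholder y hy x hx hyx

theorem ae_mem_closedBall_of_eLpNorm_top_le {α E : Type*} [MeasurableSpace α] {μ : Measure α}
    [NormedAddCommGroup E] {f : α → E} {C : ℝ≥0} (h : eLpNorm f ∞ μ ≤ C) :
    ∀ᵐ x ∂μ, f x ∈ Metric.closedBall 0 C := by
  refine (ae_le_eLpNormEssSup (f := f) (μ := μ)).mono fun x hx => mem_closedBall_zero_iff.2 ?_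
  rw [eLpNorm_exponent_top] at h
  exact_mod_cast (enorm_le_coe.1 (hx.trans h))

theorem ContinuousOn.mapsTo_closure_of_ae_restrict_mem {X Y : Type*} [TopologicalSpace X]
    [MeasurableSpace X] [TopologicalSpace Y] {μ : Measure X} [μ.IsOpenPosMeasure] {U : Set X}
    (hU : IsOpen U) {f : X → Y} (hf : ContinuousOn f (closure U)) {S : Set Y} (hS : IsClosed S)
    (hfS : ∀ᵐ x ∂μ.restrict U, f x ∈ S) : MapsTo f (closure U) S := by
  have hdense : Dense {x | x ∈ U → f x ∈ S} := μ.dense_of_ae (ae_imp_of_ae_restrict hfS)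
  have hU_sub : closure U ⊆ closure (U ∩ {x | x ∈ U → f x ∈ S}) :=
    closure_minimal (hdense.open_subset_closure_inter hU) isClosed_closure
  have hmaps : MapsTo f (U ∩ {x | x ∈ U → f x ∈ S}) S := fun x hx => hx.2 hx.1
  refine fun x hx => hS.closure_subset ?_
  exact (hmaps.closure_of_continuousOn (hf.mono (closure_mono inter_subset_left))) (hU_sub hx)

theorem HolderWith.uniformEquicontinuous {ι X Y : Type*} [PseudoEMetricSpace X]
    [PseudoEMetricSpace Y] {F : ι → X → Y} {C r : ℝ≥0} (hF : ∀ i, HolderWith C r (F i))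
    (hr : 0 < r) : UniformEquicontinuous F := by
  rw [uniformEquicontinuous_iff_uniformContinuous]
  exact HolderWith.uniformContinuous (fun x y => UniformFun.edist_le.2 fun i => hF i x y) hr

theorem Continuous.isUniformInducing_of_compactSpace {α β : Type*} [UniformSpace α]
    [CompactSpace α] [UniformSpace β] [T2Space β] {f : α → β} (hf : Continuous f)
    (hinj : Injective f) : IsUniformInducing f := by
  let e := (hf.isClosedEmbedding hinj).isEmbedding.toHomeomorph
  have : CompactSpace (range f) := isCompact_iff_compactSpace.mp (isCompact_range hf)
  have he : IsUniformInducing e :=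
    .of_comp (CompactSpace.uniformContinuous_of_continuous e.continuous)
      (CompactSpace.uniformContinuous_of_continuous e.symm.continuous)
      (by simpa only [Homeomorph.symm_comp_self] using IsUniformInducing.id)
  exact (isUniformInducing_val _).comp he

theorem Equicontinuous.of_comp_injective_of_isCompact {ι X B Y : Type*} [TopologicalSpace X]
    [UniformSpace B] [UniformSpace Y] [T2Space Y] {F : ι → X → B} {j : B → Y}
    (hj : Continuous j) (hinj : Injective j) {K : Set B} (hK : IsCompact K)
    (hFK : ∀ i x, F i x ∈ K) (hjF : Equicontinuous fun i => j ∘ F i) : Equicontinuous F := by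
  have : CompactSpace K := isCompact_iff_compactSpace.mp hK
  have hu : IsUniformInducing (j ∘ (↑) : K → Y) :=
    (hj.comp continuous_subtype_val).isUniformInducing_of_compactSpace
      (hinj.comp Subtype.val_injective)
  have : Equicontinuous fun i x => (⟨F i x, hFK i x⟩ : K) := hu.equicontinuous_iff.2 hjF
  exact (isUniformInducing_val K).equicontinuous_iff.1 this

theorem ContinuousMap.isCompact_closure_of_equicontinuous {X α : Type*} [TopologicalSpace X]
    [CompactlyCoherentSpace X] [UniformSpace α] [T2Space α] {S : Set C(X, α)}
    (hS : Set.Equicontinuous (DFunLike.coe '' S)) {K : Set α} (hK : IsCompact K)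
    (hSK : ∀ f ∈ S, ∀ x, f x ∈ K) : IsCompact (closure S) := by
  have hemb : Topology.IsClosedEmbedding (toUniformOnFunIsCompact : C(X, α) → _) :=
    ⟨isUniformEmbedding_toUniformOnFunIsCompact.isEmbedding, by
      rw [range_toUniformOnFunIsCompact]
      exact UniformOnFun.isClosed_setOfPred_continuous CompactlyCoherentSpace.isCoherentWith⟩
  have hS' : Equicontinuous ((↑) : S → X → α) := by
    rw [equicontinuous_iff_range, ← image_eq_range]; exact hS
  exact ArzelaAscoli.isCompact_closure_of_isClosedEmbedding (F := DFunLike.coe)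
    (fun _ hK' => hK') hemb (fun K' _ => hS'.equicontinuousOn K')
    fun _ _ x _ => ⟨K, hK, fun f hf => hSK f hf x⟩

theorem aubin_lions_continuous_general
    {X B Y : Type*}
    [NormedAddCommGroup X] [NormedSpace ℝ X]
    [NormedAddCommGroup B] [NormedSpace ℝ B]
    [NormedAddCommGroup Y] [NormedSpace ℝ Y]
    (jXB : X →L[ℝ] B)
    (hjXB_cpt : ∀ s : Set X, Bornology.IsBounded s → IsCompact (closure (jXB '' s)))
    (jBY : B →L[ℝ] Y) (hjBY_inj : Function.Injective jBY)
    (T : ℝ) (hT : 0 < T)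
    (r : ℝ≥0∞) (hr : 1 < r)
    (F : Set (ℝ → X)) (g : (ℝ → X) → ℝ → Y) (C C' : ℝ)
    (hF_bdd : ∀ u ∈ F, eLpNorm u ∞ (volume.restrict (Set.Ioc (0:ℝ) T)) ≤ ENNReal.ofReal C)
    (hg_mem : ∀ u ∈ F, MemLp (g u) r (volume.restrict (Set.Ioc (0:ℝ) T)))
    (hg_bdd : ∀ u ∈ F, eLpNorm (g u) r (volume.restrict (Set.Ioc (0:ℝ) T)) ≤ ENNReal.ofReal C')
    (h_prim : ∀ u ∈ F, ∀ t ∈ Set.Icc (0:ℝ) T,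
      jBY (jXB (u t)) = jBY (jXB (u 0)) + ∫ s in Set.Ioc (0:ℝ) t, g u s) :
    (∀ u ∈ F, Continuous fun t : Set.Icc (0:ℝ) T => jXB (u t)) ∧
    IsCompact (closure
      {f : C(Set.Icc (0:ℝ) T, B) | ∃ u ∈ F, ∀ t : Set.Icc (0:ℝ) T, f t = jXB (u t)}) := by
  set K := closure (jXB '' Metric.closedBall 0 C.toNNReal)
  set θ := (1 - r.toReal⁻¹).toNNReal
  have hK : IsCompact K := hjXB_cpt _ Metric.isBounded_closedBall
  have hθ : 0 < θ := Real.toNNReal_pos.2 (sub_pos.2 (ENNReal.toReal_inv_lt_one hr))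
  have holder : ∀ u ∈ F, HolderOnWith C'.toNNReal θ (fun t => jBY (jXB (u t))) (Icc 0 T) :=
    fun u hu => holderOnWith_of_eq_add_setIntegral hr.le (hg_mem u hu) (hg_bdd u hu) (h_prim u hu)
  have hmemK : ∀ u ∈ F, ∀ t ∈ Icc 0 T, jXB (u t) ∈ K := by
    intro u hu t ht
    have hae : ∀ᵐ x ∂volume.restrict (Ioo 0 T), jBY (jXB (u x)) ∈ jBY '' K := by
      refine ae_restrict_of_ae_restrict_of_subset Ioo_subset_Ioc_self ?_
      filter_upwards [ae_mem_closedBall_of_eLpNorm_top_le (hF_bdd u hu)] with x hx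
      exact mem_image_of_mem _ (subset_closure (mem_image_of_mem _ hx))
    have hmaps := ((holder u hu).continuousOn hθ).mono (closure_Ioo hT.ne).subset
      |>.mapsTo_closure_of_ae_restrict_mem isOpen_Ioo (hK.image jBY.continuous).isClosed hae
    rw [closure_Ioo hT.ne] at hmaps
    exact hjBY_inj.mem_set_image.1 (hmaps ht)
  have hequi : Equicontinuous fun u : F => fun t : Icc 0 T => jXB (u.1 t) :=
    .of_comp_injective_of_isCompact jBY.continuous hjBY_inj hK (fun u t => hmemK u u.2 t t.2)
      (HolderWith.uniformEquicontinuous (fun u : F => (holder u u.2).holderWith)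
        hθ).equicontinuous
  refine ⟨fun u hu => hequi.continuous ⟨u, hu⟩, ?_⟩
  refine ContinuousMap.isCompact_closure_of_equicontinuous ?_ hK ?_
  · refine (equicontinuous_iff_range.1 hequi).mono ?_
    rintro _ ⟨f, ⟨u, hu, hfu⟩, rfl⟩
    exact ⟨⟨u, hu⟩, funext fun t => (hfu t).symm⟩
  · rintro f ⟨u, hu, hfu⟩ t
    exact hfu t ▸ hmemK u hu t t.2

/-- **Aubin--Lions lemma** (Simon, Corollary 4, case `p = ∞`).
Let `X ⊂⊂ B ⊂ Y` be Banach spaces (compact embedding `jXB`, continuous embedding `jBY`).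
If `F` is a family of functions `[0,T] → X` bounded in `L^∞(0,T;X)` whose time-derivatives
`g u` (in the sense of primitives, valued in `Y`) are bounded in `L^r(0,T;Y)` with `r > 1`,
then (composing with the embedding into `B`) `F` consists of continuous `B`-valued functions
and is relatively compact in `C([0,T];B)`. -/
theorem aubin_lions_continuous
    {X B Y : Type*}
    [NormedAddCommGroup X] [NormedSpace ℝ X] [CompleteSpace X]
    [NormedAddCommGroup B] [NormedSpace ℝ B] [CompleteSpace B]
    [NormedAddCommGroup Y] [NormedSpace ℝ Y] [CompleteSpace Y]
    (jXB : X →L[ℝ] B) (hjXB_inj : Function.Injective jXB)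
    (hjXB_cpt : ∀ s : Set X, Bornology.IsBounded s → IsCompact (closure (jXB '' s)))
    (jBY : B →L[ℝ] Y) (hjBY_inj : Function.Injective jBY)
    (T : ℝ) (hT : 0 < T)
    (r : ℝ≥0∞) (hr : 1 < r)
    (F : Set (ℝ → X)) (g : (ℝ → X) → ℝ → Y) (C C' : ℝ)
    (hF_mem : ∀ u ∈ F, MemLp u ∞ (volume.restrict (Set.Ioc (0:ℝ) T)))
    (hF_bdd : ∀ u ∈ F, eLpNorm u ∞ (volume.restrict (Set.Ioc (0:ℝ) T)) ≤ ENNReal.ofReal C)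
    (hg_mem : ∀ u ∈ F, MemLp (g u) r (volume.restrict (Set.Ioc (0:ℝ) T)))
    (hg_bdd : ∀ u ∈ F, eLpNorm (g u) r (volume.restrict (Set.Ioc (0:ℝ) T)) ≤ ENNReal.ofReal C')
    (h_prim : ∀ u ∈ F, ∀ t ∈ Set.Icc (0:ℝ) T,
      jBY (jXB (u t)) = jBY (jXB (u 0)) + ∫ s in Set.Ioc (0:ℝ) t, g u s) :
    (∀ u ∈ F, Continuous fun t : Set.Icc (0:ℝ) T => jXB (u t)) ∧
    IsCompact (closure
      {f : C(Set.Icc (0:ℝ) T, B) | ∃ u ∈ F, ∀ t : Set.Icc (0:ℝ) T, f t = jXB (u t)}) :=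
  aubin_lions_continuous_general jXB hjXB_cpt jBY hjBY_inj T hT r hr F g C C' hF_bdd hg_mem hg_bdd
    h_prim
end

section
/- Let H be a real Hilbert space, E a real normed vector space, and j : H → E an injective continuous linear map. Let (u_n) be a sequence in H that is bounded in H, and suppose that (j(u_n)) converges in E to some v ∈ E. Then there exists a unique u ∈ H with j(u) = v, and u_n converges weakly to u in H, i.e. ⟨u_n, w⟩ → ⟨u, w⟩ for every w ∈ H. -/
open Filter Topology

open scoped InnerProductSpace

/-!
The functionals `w ↦ ⟪u n, w⟫` are uniformly bounded, hence equicontinuous, so the set of `w`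
on which they form a Cauchy sequence is a closed subspace. It contains every `w` whose functional
`⟪w, ·⟫` factors as `f ∘ j` with `f` in the dual of `E`, because then `⟪w, u n⟫ = f (j (u n))`
tends to `f v`; by Hahn–Banach and the injectivity of `j` these `w` span a dense subspace. Hence
`⟪u n, w⟫` converges for every `w`; by Banach–Steinhaus the limit is a continuous functional,
represented by some `l` (Riesz), and testing `j l` against the dual of `E` gives `j l = v`.
-/

theorem Equicontinuous.isClosed_setOf_cauchySeq {ι X α : Type*} [SemilatticeSup ι] [Nonempty ι]
    [TopologicalSpace X] [UniformSpace α] {F : ι → X → α} (hF : Equicontinuous F) :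
    IsClosed {x | CauchySeq (F · x)} := by
  refine closure_subset_iff_isClosed.mp fun x hx => cauchySeq_iff_tendsto.mpr fun U hU => ?_
  obtain ⟨V, hV, hVsymm, hVU⟩ := comp_comp_symm_mem_uniformity_sets hU
  obtain ⟨y, hyCauchy, hyx⟩ :=
    (mem_closure_iff_frequently.mp hx).and_eventually (hF x V hV) |>.exists
  refine mem_map.mpr (mem_of_superset (cauchySeq_iff_tendsto.mp hyCauchy hV) fun p hp => ?_)
  exact hVU ⟨F p.2 y, ⟨F p.1 y, hyx p.1, hp⟩, SetRel.symm V (hyx p.2)⟩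

section

variable {𝕜 E G : Type*} [NontriviallyNormedField 𝕜] [NormedAddCommGroup E] [NormedSpace 𝕜 E]
  [NormedAddCommGroup G] [NormedSpace 𝕜 G]

theorem ContinuousLinearMap.cauchySeq_apply_of_dense_span {F : ℕ → E →L[𝕜] G}
    (hF : ∃ C, ∀ n, ‖F n‖ ≤ C) {s : Set E} (hs : Dense (Submodule.span 𝕜 s : Set E))
    (hsF : ∀ x ∈ s, CauchySeq (F · x)) (x : E) : CauchySeq (F · x) := by
  let M : Submodule 𝕜 E :=
    { carrier := {x | CauchySeq (F · x)}
      add_mem' := fun {x y} hx hy => by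
        show CauchySeq fun n => F n (x + y)
        simp only [map_add]
        exact hx.add hy
      zero_mem' := by
        show CauchySeq fun n => F n 0
        simpa only [map_zero] using cauchySeq_const (0 : G)
      smul_mem' := fun c x hx => by
        show CauchySeq fun n => F n (c • x)
        simp only [map_smul]
        exact (uniformContinuous_const_smul c).comp_cauchySeq hx }
  have hM : IsClosed (M : Set E) :=
    Equicontinuous.isClosed_setOf_cauchySeq (((NormedSpace.equicontinuous_TFAE F).out 5 1).mp hF)
  have hsM : (Submodule.span 𝕜 s : Set E) ⊆ M := Submodule.span_le.mpr hsF
  exact closure_minimal hsM hM (hs x)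

end

section

variable {𝕜 H E : Type*} [RCLike 𝕜] [NormedAddCommGroup H] [InnerProductSpace 𝕜 H]
  [CompleteSpace H]

theorem dense_span_setOf_innerSL_eq_comp [NormedAddCommGroup E] [NormedSpace 𝕜 E]
    {j : H →L[𝕜] E} (hj : Function.Injective j) :
    Dense (Submodule.span 𝕜 {w : H | ∃ f : StrongDual 𝕜 E, innerSL 𝕜 w = f.comp j} : Set H) := by
  rw [Submodule.dense_iff_topologicalClosure_eq_top, Submodule.topologicalClosure_eq_top_iff,
    Submodule.eq_bot_iff]
  intro x hx
  refine hj ((map_zero j).symm ▸ SeparatingDual.eq_zero_of_forall_dual_eq_zero (R := 𝕜) fun f => ?_)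
  set w := (InnerProductSpace.toDual 𝕜 H).symm (f.comp j)
  have hw : innerSL 𝕜 w = f.comp j := by
    ext y; exact InnerProductSpace.toDual_symm_apply
  calc f (j x) = ⟪w, x⟫_𝕜 := (InnerProductSpace.toDual_symm_apply (y := f.comp j)).symm
    _ = 0 := (Submodule.mem_orthogonal _ x).mp hx w (Submodule.subset_span ⟨f, hw⟩)

theorem exists_tendsto_inner_of_cauchySeq_inner {u : ℕ → H}
    (hu : ∀ w, CauchySeq fun n => ⟪u n, w⟫_𝕜) :
    ∃ l : H, ∀ w, Tendsto (fun n => ⟪u n, w⟫_𝕜) atTop (𝓝 ⟪l, w⟫_𝕜) := by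
  choose L hL using fun w => cauchySeq_tendsto_of_complete (hu w)
  let g : StrongDual 𝕜 H :=
    continuousLinearMapOfTendsto (fun n => innerSL 𝕜 (u n)) (tendsto_pi_nhds.mpr hL)
  refine ⟨(InnerProductSpace.toDual 𝕜 H).symm g, fun w => ?_⟩
  rw [InnerProductSpace.toDual_symm_apply]
  exact hL w

theorem tendsto_dual_apply_of_tendsto_inner {u : ℕ → H} {l : H}
    (hu : ∀ w, Tendsto (fun n => ⟪u n, w⟫_𝕜) atTop (𝓝 ⟪l, w⟫_𝕜)) (φ : StrongDual 𝕜 H) :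
    Tendsto (fun n => φ (u n)) atTop (𝓝 (φ l)) := by
  set w := (InnerProductSpace.toDual 𝕜 H).symm φ
  have hφ : ∀ x, φ x = starRingEnd 𝕜 ⟪x, w⟫_𝕜 := fun x => by
    rw [inner_conj_symm, InnerProductSpace.toDual_symm_apply]
  simp only [hφ]
  exact (RCLike.continuous_conj.tendsto _).comp (hu w)

end

/-- If `(u n)` is a bounded sequence in a real Hilbert space `H` and its image under an
injective continuous linear map `j : H → E` converges (strongly) in the normed space `E`
to some `v`, then there is a unique `u ∈ H` with `j u = v` and `u n` converges weakly
to `u` in `H`. -/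
theorem weak_limit_of_bounded_of_image_tendsto
    {H E : Type*}
    [NormedAddCommGroup H] [InnerProductSpace ℝ H] [CompleteSpace H]
    [NormedAddCommGroup E] [NormedSpace ℝ E]
    (j : H →L[ℝ] E) (hj : Function.Injective j)
    (u : ℕ → H) (hbdd : ∃ C : ℝ, ∀ n, ‖u n‖ ≤ C)
    (v : E) (hconv : Tendsto (fun n => j (u n)) atTop (nhds v)) :
    ∃! l : H, j l = v ∧
      ∀ w : H, Tendsto (fun n => (inner ℝ (u n) w : ℝ)) atTop (nhds (inner ℝ l w)) := by
  have hcauchy_factoring : ∀ w ∈ {w : H | ∃ f : StrongDual ℝ E, innerSL ℝ w = f.comp j},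
      CauchySeq fun n => innerSL ℝ (u n) w := by
    rintro w ⟨f, hf⟩
    have hfu : ∀ n, innerSL ℝ (u n) w = f (j (u n)) := fun n => by
      rw [innerSL_apply_apply, real_inner_comm, ← innerSL_apply_apply, hf,
        ContinuousLinearMap.comp_apply]
    simp only [hfu]
    exact ((f.continuous.tendsto v).comp hconv).cauchySeq
  have hnorm : ∃ C, ∀ n, ‖innerSL ℝ (u n)‖ ≤ C := by simpa only [innerSL_apply_norm] using hbdd
  obtain ⟨l, hl⟩ := exists_tendsto_inner_of_cauchySeq_inner
    (ContinuousLinearMap.cauchySeq_apply_of_dense_span hnorm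
      (dense_span_setOf_innerSL_eq_comp hj) hcauchy_factoring)
  have hjl : j l = v := SeparatingDual.eq_iff_forall_dual_eq.mpr fun f =>
    tendsto_nhds_unique (tendsto_dual_apply_of_tendsto_inner hl (f.comp j))
      ((f.continuous.tendsto v).comp hconv)
  exact ⟨l, ⟨hjl, hl⟩, fun l' hl' => hj (hl'.1.trans hjl.symm)⟩
end

section
/- Let H be a real Hilbert space, E a real normed vector space, and j : H → E an injective continuous linear map. Let T > 0 and let (u_n) be a sequence of functions u_n : [0,T] → H with sup_{n} sup_{t∈[0,T]} ‖u_n(t)‖_H ≤ C for some constant C. Let u : [0,T] → E and suppose sup_{t∈[0,T]} ‖j(u_n(t)) − u(t)‖_E → 0 as n → ∞. Then for every t ∈ [0,T] there exists a (unique) v(t) ∈ H with j(v(t)) = u(t), ‖v(t)‖_H ≤ C, and for every t ∈ [0,T] the whole sequence u_n(t) converges weakly to v(t) in H. -/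
/-!
By Riesz, the vectors `u n t` are functionals in the `C`-ball of the dual of `H`, which is
weak-* compact (Banach–Alaoglu). If `w ∈ H` represents a weak-* cluster point, then for every
`φ ∈ E*` the vector `y` representing `φ ∘ j` gives `φ (j w) = ⟪w, y⟫ = lim φ (j (u n t)) = φ (v t)`,
so `j w = v t` by Hahn–Banach. Injectivity of `j` makes the cluster point unique, and a net in a
compact set with a unique cluster point converges to it.
-/

open Filter Topology

theorem MapClusterPt.eq_of_tendsto {X ι : Type*} [TopologicalSpace X] [T2Space X]
    {l : Filter ι} {g : ι → X} {x y : X} (hx : MapClusterPt x l g) (hy : Tendsto g l (𝓝 y)) :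
    x = y :=
  eq_of_nhds_neBot (hx.neBot.mono (inf_le_inf_left _ hy))

section

variable {H E : Type*} [NormedAddCommGroup H] [InnerProductSpace ℝ H] [CompleteSpace H]
  [NormedAddCommGroup E] [NormedSpace ℝ E] {ι : Type*} {l : Filter ι}

open InnerProductSpace StrongDual WeakDual

theorem map_toDual_symm_eq_of_mapClusterPt (j : H →L[ℝ] E) {a : ι → H} {e : E}
    (he : Tendsto (fun i ↦ j (a i)) l (𝓝 e)) {ψ : WeakDual ℝ H}
    (hψ : MapClusterPt ψ l fun i ↦ toWeakDual (toDual ℝ H (a i))) :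
    j ((toDual ℝ H).symm (toStrongDual ψ)) = e := by
  refine (SeparatingDual.eq_iff_forall_dual_eq (R := ℝ)).2 fun φ ↦ ?_
  set y := (toDual ℝ H).symm (φ ∘L j)
  have hy : ∀ x, inner ℝ y x = φ (j x) := fun x ↦ toDual_symm_apply
  have hψy : MapClusterPt (ψ y) l fun i ↦ φ (j (a i)) := by
    convert hψ.continuousAt_comp (WeakDual.eval_continuous y).continuousAt using 1
    funext i
    simp [← hy, real_inner_comm]
  calc φ (j ((toDual ℝ H).symm (toStrongDual ψ)))
      = ψ y := by rw [← hy, real_inner_comm, toDual_symm_apply]; rfl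
    _ = φ e := hψy.eq_of_tendsto ((φ.continuous.tendsto e).comp he)

theorem exists_tendsto_inner_of_norm_le_of_tendsto_map [l.NeBot] {j : H →L[ℝ] E}
    (hj : Function.Injective j) {a : ι → H} {C : ℝ} (ha : ∀ i, ‖a i‖ ≤ C) {e : E}
    (he : Tendsto (fun i ↦ j (a i)) l (𝓝 e)) :
    ∃ w, j w = e ∧ ‖w‖ ≤ C ∧ ∀ z, Tendsto (fun i ↦ inner ℝ (a i) z) l (𝓝 (inner ℝ w z)) := by
  set ℓ : ι → WeakDual ℝ H := fun i ↦ toWeakDual (toDual ℝ H (a i))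
  set K := toStrongDual ⁻¹' Metric.closedBall (0 : StrongDual ℝ H) C
  have hK : IsCompact K := isCompact_closedBall 0 C
  have hℓK : ∀ᶠ i in l, ℓ i ∈ K := Eventually.of_forall fun i ↦ by simpa [K, ℓ] using ha i
  obtain ⟨ψ, hψK, hψ⟩ := hK.exists_mapClusterPt (tendsto_principal.2 hℓK)
  have hjψ := map_toDual_symm_eq_of_mapClusterPt j he hψ
  have hℓψ : Tendsto ℓ l (𝓝 ψ) := hK.tendsto_nhds_of_unique_mapClusterPt hℓK fun ψ' _ hψ' ↦
    toStrongDual.injective <| (toDual ℝ H).symm.injective <|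
      hj <| (map_toDual_symm_eq_of_mapClusterPt j he hψ').trans hjψ.symm
  refine ⟨(toDual ℝ H).symm (toStrongDual ψ), hjψ, by simpa [K] using hψK, fun z ↦ ?_⟩
  rw [toDual_symm_apply]
  exact ((WeakDual.eval_continuous z).tendsto ψ).comp hℓψ

end

theorem weak_limit_uniform_of_bounded_of_image_tendstoUniformly_general
    {H E : Type*}
    [NormedAddCommGroup H] [InnerProductSpace ℝ H] [CompleteSpace H]
    [NormedAddCommGroup E] [NormedSpace ℝ E]
    (j : H →L[ℝ] E) (hj : Function.Injective j)
    (T : ℝ)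
    (u : ℕ → ℝ → H) (C : ℝ)
    (hbdd : ∀ n, ∀ t ∈ Set.Icc (0:ℝ) T, ‖u n t‖ ≤ C)
    (v : ℝ → E)
    (hconv : TendstoUniformlyOn (fun n t => j (u n t)) v atTop (Set.Icc (0:ℝ) T)) :
    ∀ t ∈ Set.Icc (0:ℝ) T, ∃! w : H, j w = v t ∧ ‖w‖ ≤ C ∧
      ∀ z : H, Tendsto (fun n => (inner ℝ (u n t) z : ℝ)) atTop (nhds (inner ℝ w z)) := by
  intro t ht
  obtain ⟨w, hjw, hwC, hweak⟩ := exists_tendsto_inner_of_norm_le_of_tendsto_map hj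
    (fun n ↦ hbdd n t ht) (hconv.tendsto_at ht)
  exact ⟨w, ⟨hjw, hwC, hweak⟩, fun w' hw' ↦ hj (hw'.1.trans hjw.symm)⟩

/-- Let `j : H → E` be an injective continuous linear map from a real Hilbert space `H`
to a normed space `E`. If `u n : [0,T] → H` are uniformly bounded by `C` in `H` and
`j ∘ u n` converges uniformly on `[0,T]` to `v : [0,T] → E`, then for every `t ∈ [0,T]`
there is a unique `w ∈ H` with `j w = v t`, `‖w‖ ≤ C`, and the whole sequence `u n t`
converges weakly to `w` in `H`. -/
theorem weak_limit_uniform_of_bounded_of_image_tendstoUniformly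
    {H E : Type*}
    [NormedAddCommGroup H] [InnerProductSpace ℝ H] [CompleteSpace H]
    [NormedAddCommGroup E] [NormedSpace ℝ E]
    (j : H →L[ℝ] E) (hj : Function.Injective j)
    (T : ℝ) (hT : 0 < T)
    (u : ℕ → ℝ → H) (C : ℝ)
    (hbdd : ∀ n, ∀ t ∈ Set.Icc (0:ℝ) T, ‖u n t‖ ≤ C)
    (v : ℝ → E)
    (hconv : TendstoUniformlyOn (fun n t => j (u n t)) v atTop (Set.Icc (0:ℝ) T)) :
    ∀ t ∈ Set.Icc (0:ℝ) T, ∃! w : H, j w = v t ∧ ‖w‖ ≤ C ∧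
      ∀ z : H, Tendsto (fun n => (inner ℝ (u n t) z : ℝ)) atTop (nhds (inner ℝ w z)) :=
  weak_limit_uniform_of_bounded_of_image_tendstoUniformly_general j hj T u C hbdd v hconv
end

section
/- Let H be a real Hilbert space, E a real normed vector space, and j : H → E an injective continuous linear map. Let T > 0 and let u : [0,T] → H be a function such that sup_{t∈[0,T]} ‖u(t)‖_H ≤ C for some constant C, and such that t ↦ j(u(t)) is continuous from [0,T] to E. Then u is weakly continuous: for every sequence (t_n) in [0,T] converging to t ∈ [0,T], one has ⟨u(t_n), w⟩ → ⟨u(t), w⟩ for every w ∈ H. -/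
open Filter Topology

/-!
Pull the continuous functionals of `E` back along `j` and represent them in `H` by the Riesz
theorem. Their orthogonal complement is `ker j = 0`, so these representatives are dense in `H`,
and on them weak convergence of `u (t n)` is just the norm convergence of `j (u (t n))`.
A uniform bound makes the functionals `⟪u (t n), ·⟫` equicontinuous, so convergence on a dense
set propagates to every `w`.
-/

section Equicontinuity

variable {𝕜 H : Type*} [RCLike 𝕜] [NormedAddCommGroup H] [InnerProductSpace 𝕜 H]

theorem tendsto_inner_of_dense_of_norm_le {ι : Type*} {l : Filter ι} {x : ι → H} {y : H}
    {C : ℝ} (hx : ∀ i, ‖x i‖ ≤ C) {s : Set H} (hs : Dense s)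
    (h : ∀ v ∈ s, Tendsto (fun i => inner 𝕜 (x i) v) l (𝓝 (inner 𝕜 y v))) (w : H) :
    Tendsto (fun i => inner 𝕜 (x i) w) l (𝓝 (inner 𝕜 y w)) := by
  have hnorm : ∃ C, ∀ i, ‖innerSL 𝕜 (x i)‖ ≤ C :=
    ⟨C, fun i => (innerSL_apply_norm 𝕜 (x i)).trans_le (hx i)⟩
  have hequi : Equicontinuous fun i => (innerSL 𝕜 (x i) : H → 𝕜) :=
    ((NormedSpace.equicontinuous_TFAE fun i => innerSL 𝕜 (x i)).out 5 1).mp hnorm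
  have hclosed := hequi.isClosed_setOfPred_tendsto (l := l) (innerSL 𝕜 y).continuous
  exact hclosed.closure_subset_iff.mpr h (hs w)

end Equicontinuity

section DualPullback

variable {H E : Type*} [NormedAddCommGroup H] [InnerProductSpace ℝ H] [CompleteSpace H]
  [NormedAddCommGroup E] [NormedSpace ℝ E]

noncomputable def dualPullback (j : H →L[ℝ] E) : StrongDual ℝ E →ₗ[ℝ] H where
  toFun φ := (InnerProductSpace.toDual ℝ H).symm (φ ∘L j)
  map_add' φ ψ := by simp [ContinuousLinearMap.add_comp]
  map_smul' c φ := by simp [ContinuousLinearMap.smul_comp]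

theorem inner_dualPullback (j : H →L[ℝ] E) (φ : StrongDual ℝ E) (x : H) :
    inner ℝ (dualPullback j φ) x = φ (j x) :=
  InnerProductSpace.toDual_symm_apply

theorem dense_range_dualPullback {j : H →L[ℝ] E} (hj : Function.Injective j) :
    Dense (LinearMap.range (dualPullback j) : Set H) := by
  rw [Submodule.dense_iff_topologicalClosure_eq_top, Submodule.topologicalClosure_eq_top_iff,
    Submodule.eq_bot_iff]
  intro q hq
  have hjq : j q = 0 := SeparatingDual.eq_zero_of_forall_dual_eq_zero fun φ => by
    rw [← inner_dualPullback]
    exact (Submodule.mem_orthogonal _ q).mp hq _ ⟨φ, rfl⟩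
  exact hj (hjq.trans j.map_zero.symm)

theorem tendsto_inner_of_tendsto_map_of_norm_le {j : H →L[ℝ] E} (hj : Function.Injective j)
    {ι : Type*} {l : Filter ι} {x : ι → H} {y : H} {C : ℝ} (hx : ∀ i, ‖x i‖ ≤ C)
    (hjx : Tendsto (fun i => j (x i)) l (𝓝 (j y))) (w : H) :
    Tendsto (fun i => inner ℝ (x i) w) l (𝓝 (inner ℝ y w)) := by
  refine tendsto_inner_of_dense_of_norm_le hx (dense_range_dualPullback hj) ?_ w
  rintro _ ⟨φ, rfl⟩
  simp only [real_inner_comm (dualPullback j φ), inner_dualPullback]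
  exact (φ.continuous.tendsto _).comp hjx

end DualPullback

theorem weakly_continuous_of_bounded_of_image_continuous_general
    {H E : Type*}
    [NormedAddCommGroup H] [InnerProductSpace ℝ H] [CompleteSpace H]
    [NormedAddCommGroup E] [NormedSpace ℝ E]
    (j : H →L[ℝ] E) (hj : Function.Injective j)
    (T : ℝ)
    (u : ℝ → H) (C : ℝ)
    (hbdd : ∀ t ∈ Set.Icc (0:ℝ) T, ‖u t‖ ≤ C)
    (hcont : ContinuousOn (fun t => j (u t)) (Set.Icc (0:ℝ) T)) :
    ∀ t ∈ Set.Icc (0:ℝ) T, ∀ tseq : ℕ → ℝ,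
      (∀ n, tseq n ∈ Set.Icc (0:ℝ) T) → Tendsto tseq atTop (nhds t) →
      ∀ w : H, Tendsto (fun n => (inner ℝ (u (tseq n)) w : ℝ)) atTop
        (nhds (inner ℝ (u t) w)) := by
  intro t ht tseq htseq hlim
  have hjlim : Tendsto (fun n => j (u (tseq n))) atTop (𝓝 (j (u t))) :=
    (hcont t ht).tendsto.comp (tendsto_nhdsWithin_iff.mpr ⟨hlim, .of_forall htseq⟩)
  exact tendsto_inner_of_tendsto_map_of_norm_le hj (fun n => hbdd _ (htseq n)) hjlim

/-- Let `j : H → E` be an injective continuous linear map from a real Hilbert space `H`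
to a normed space `E`. If `u : [0,T] → H` is bounded by `C` in `H` and `j ∘ u` is
continuous from `[0,T]` to `E`, then `u` is weakly continuous: along any sequence
`t n → t` in `[0,T]`, `u (t n)` converges weakly to `u t` in `H`. -/
theorem weakly_continuous_of_bounded_of_image_continuous
    {H E : Type*}
    [NormedAddCommGroup H] [InnerProductSpace ℝ H] [CompleteSpace H]
    [NormedAddCommGroup E] [NormedSpace ℝ E]
    (j : H →L[ℝ] E) (hj : Function.Injective j)
    (T : ℝ) (hT : 0 < T)
    (u : ℝ → H) (C : ℝ)
    (hbdd : ∀ t ∈ Set.Icc (0:ℝ) T, ‖u t‖ ≤ C)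
    (hcont : ContinuousOn (fun t => j (u t)) (Set.Icc (0:ℝ) T)) :
    ∀ t ∈ Set.Icc (0:ℝ) T, ∀ tseq : ℕ → ℝ,
      (∀ n, tseq n ∈ Set.Icc (0:ℝ) T) → Tendsto tseq atTop (nhds t) →
      ∀ w : H, Tendsto (fun n => (inner ℝ (u (tseq n)) w : ℝ)) atTop
        (nhds (inner ℝ (u t) w)) :=
  weakly_continuous_of_bounded_of_image_continuous_general j hj T u C hbdd hcont
end
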